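/- Every simple series-parallel graph (equivalently, partial 2-tree) G = (V, E) satisfies |E| ≥ 2·|T_G|, where T_G is the set of triangles of G. -/
import Mathlib


/-- `t` is (the vertex set of) a triangle of `G`. -/
def IsTriangle {V : Type*} (G : SimpleGraph V) (t : Finset V) : Prop :=
  t.card = 3 ∧ ∀ x ∈ t, ∀ y ∈ t, x ≠ y → G.Adj x y

/-- The set of (three) edges of the triangle with vertex set `t`. -/
def triEdges {V : Type*} [DecidableEq V] (t : Finset V) : Finset (Sym2 V) :=
  ((t ×ˢ t).filter fun p => p.1 ≠ p.2).image fun p => s(p.1, p.2)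

/-- A triangle cover of `G`: a set of edges of `G` intersecting (the edge set of)
every triangle of `G`. -/
def IsTriangleCover {V : Type*} [DecidableEq V] (G : SimpleGraph V)
    (C : Finset (Sym2 V)) : Prop :=
  (∀ e ∈ C, e ∈ G.edgeSet) ∧
    ∀ t : Finset V, IsTriangle G t → ∃ e ∈ triEdges t, e ∈ C

/-- A triangle packing of `G`: a set of pairwise edge-disjoint triangles. -/
def IsTrianglePacking {V : Type*} [DecidableEq V] (G : SimpleGraph V)
    (P : Finset (Finset V)) : Prop :=
  (∀ t ∈ P, IsTriangle G t) ∧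
    ∀ t₁ ∈ P, ∀ t₂ ∈ P, t₁ ≠ t₂ → Disjoint (triEdges t₁) (triEdges t₂)

/-- The triangle covering number τ_t(G). -/
noncomputable def tauT {V : Type*} [DecidableEq V] (G : SimpleGraph V) : ℕ :=
  sInf {n | ∃ C : Finset (Sym2 V), IsTriangleCover G C ∧ C.card = n}

/-- The triangle packing number ν_t(G). -/
noncomputable def nuT {V : Type*} [DecidableEq V] (G : SimpleGraph V) : ℕ :=
  sSup {n | ∃ P : Finset (Finset V), IsTrianglePacking G P ∧ P.card = n}

/-- The number of triangles of `G`, i.e. |T_G|. -/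
noncomputable def numTris {V : Type*} (G : SimpleGraph V) : ℕ :=
  Set.ncard {t : Finset V | IsTriangle G t}

/-- The number of edges of `G`. -/
noncomputable def numEdges {V : Type*} (G : SimpleGraph V) : ℕ :=
  Set.ncard G.edgeSet

/-- `IsTwoTree s H` means `H` is a 2-tree with support `s`: it is built from a
single edge by repeatedly picking an edge `{u,v}`, adding a new vertex `w`
and the edges `{u,w}`, `{v,w}`. -/
inductive IsTwoTree {W : Type} : Set W → SimpleGraph W → Prop
  | base (u v : W) (huv : u ≠ v) :
      IsTwoTree {u, v} (SimpleGraph.fromEdgeSet {s(u, v)})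
  | step (s : Set W) (H : SimpleGraph W) (u v w : W)
      (hH : IsTwoTree s H) (huv : H.Adj u v) (hw : w ∉ s) :
      IsTwoTree (insert w s) (H ⊔ SimpleGraph.fromEdgeSet {s(u, w), s(v, w)})

/-- `G` is a partial 2-tree: it embeds as a subgraph into some 2-tree. -/
def IsPartialTwoTree {V : Type} (G : SimpleGraph V) : Prop :=
  ∃ (W : Type) (s : Set W) (H : SimpleGraph W) (f : V ↪ W),
    IsTwoTree s H ∧ ∀ a b : V, G.Adj a b → H.Adj (f a) (f b)

section Aux

lemma mem_triEdges {V : Type*} [DecidableEq V] {t : Finset V} {e : Sym2 V} :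
    e ∈ triEdges t ↔ ∃ x ∈ t, ∃ y ∈ t, x ≠ y ∧ e = s(x, y) := by
  simp only [triEdges, Finset.mem_image, Finset.mem_filter, Finset.mem_product, Prod.exists]
  constructor
  · rintro ⟨a, b, ⟨⟨ha, hb⟩, hab⟩, rfl⟩
    exact ⟨a, ha, b, hb, hab, rfl⟩
  · rintro ⟨a, ha, b, hb, hab, rfl⟩
    exact ⟨a, b, ⟨⟨ha, hb⟩, hab⟩, rfl⟩

lemma IsTwoTree.support {W : Type} {s : Set W} {H : SimpleGraph W}
    (h : IsTwoTree s H) : ∀ a b : W, H.Adj a b → a ∈ s ∧ b ∈ s := by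
  induction h with
  | base u v huv =>
    intro a b hab
    rw [SimpleGraph.fromEdgeSet_adj] at hab
    obtain ⟨h1, _⟩ := hab
    simp only [Set.mem_singleton_iff, Sym2.eq_iff] at h1
    rcases h1 with ⟨rfl, rfl⟩ | ⟨rfl, rfl⟩ <;> simp
  | step s H u v w hH huv hw ih =>
    intro a b hab
    rw [SimpleGraph.sup_adj] at hab
    rcases hab with hab | hab
    · exact ⟨Set.mem_insert_of_mem _ (ih a b hab).1, Set.mem_insert_of_mem _ (ih a b hab).2⟩
    · rw [SimpleGraph.fromEdgeSet_adj] at hab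
      have hu := (ih u v huv).1
      have hv := (ih u v huv).2
      obtain ⟨h1, _⟩ := hab
      simp only [Set.mem_insert_iff, Set.mem_singleton_iff, Sym2.eq_iff] at h1
      rcases h1 with (⟨rfl, rfl⟩ | ⟨rfl, rfl⟩) | (⟨rfl, rfl⟩ | ⟨rfl, rfl⟩) <;>
        simp [Set.mem_insert_iff, hu, hv]

lemma twoTree_edgeAssign {W : Type} [DecidableEq W] {s : Set W} {H : SimpleGraph W}
    (h : IsTwoTree s H) :
    ∃ F : Finset W → Sym2 W × Sym2 W,
      ∀ t : Finset W, IsTriangle H t →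
        ((F t).1 ∈ triEdges t ∧ (F t).2 ∈ triEdges t ∧ (F t).1 ≠ (F t).2) ∧
        ∀ t' : Finset W, IsTriangle H t' → t ≠ t' →
          (F t).1 ≠ (F t').1 ∧ (F t).1 ≠ (F t').2 ∧
          (F t).2 ≠ (F t').1 ∧ (F t).2 ≠ (F t').2 := by
  induction h with
  | base u v huv =>
    refine ⟨fun _ => (s(u, u), s(u, u)), ?_⟩
    intro t ht
    exfalso
    obtain ⟨x, y, z, hxy, hxz, hyz, rfl⟩ := Finset.card_eq_three.mp ht.1
    have h1 := ht.2 x (by simp) y (by simp) hxy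
    have h2 := ht.2 x (by simp) z (by simp) hxz
    rw [SimpleGraph.fromEdgeSet_adj] at h1 h2
    have e1 : s(x, y) = s(u, v) := h1.1
    have e2 : s(x, z) = s(u, v) := h2.1
    have e3 : s(x, y) = s(x, z) := e1.trans e2.symm
    rw [Sym2.eq_iff] at e3
    rcases e3 with ⟨_, rfl⟩ | ⟨rfl, rfl⟩
    · exact hyz rfl
    · exact hxz rfl
  | step s H u v w hH huv hw ih =>
    obtain ⟨F, hF⟩ := ih
    have hsup := hH.support
    have hu : u ∈ s := (hsup u v huv).1
    have hv : v ∈ s := (hsup u v huv).2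
    have hwu : w ≠ u := fun h => hw (h ▸ hu)
    have hwv : w ≠ v := fun h => hw (h ▸ hv)
    have huv' : u ≠ v := huv.ne
    have hnotw : ∀ t : Finset W, IsTriangle H t → w ∉ t := by
      intro t ht hwt
      obtain ⟨a, ha, haw⟩ := Finset.exists_mem_ne (by rw [ht.1]; norm_num) w
      exact hw (hsup a w (ht.2 a ha w hwt haw)).2
    have hnotwe : ∀ t : Finset W, IsTriangle H t → ∀ e ∈ triEdges t, w ∉ e := by
      intro t ht e he hwe
      obtain ⟨x, hx, y, hy, hxy, rfl⟩ := mem_triEdges.mp he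
      rcases Sym2.mem_iff.mp hwe with rfl | rfl
      · exact hnotw t ht hx
      · exact hnotw t ht hy
    have hchar : ∀ t : Finset W,
        IsTriangle (H ⊔ SimpleGraph.fromEdgeSet {s(u, w), s(v, w)}) t →
        t = {u, v, w} ∨ IsTriangle H t := by
      intro t ht
      by_cases hwt : w ∈ t
      · left
        have hadjw : ∀ a ∈ t, a ≠ w → a = u ∨ a = v := by
          intro a ha haw
          have h := ht.2 a ha w hwt haw
          rw [SimpleGraph.sup_adj] at h
          rcases h with h | h
          · exact absurd (hsup a w h).2 hw
          · rw [SimpleGraph.fromEdgeSet_adj] at h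
            obtain ⟨h1, -⟩ := h
            simp only [Set.mem_insert_iff, Set.mem_singleton_iff, Sym2.eq_iff] at h1
            rcases h1 with (⟨h2, _⟩ | ⟨h2, _⟩) | (⟨h2, _⟩ | ⟨h2, _⟩)
            · exact Or.inl h2
            · exact absurd h2 haw
            · exact Or.inr h2
            · exact absurd h2 haw
        have hcard2 : (t.erase w).card = 2 := by
          rw [Finset.card_erase_of_mem hwt, ht.1]
        obtain ⟨a, b, hab, h2⟩ := Finset.card_eq_two.mp hcard2
        have ha' : a ∈ t.erase w := h2 ▸ Finset.mem_insert_self a {b}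
        have hb' : b ∈ t.erase w := h2 ▸ (by simp : b ∈ ({a, b} : Finset W))
        have ha : a ∈ t := Finset.mem_of_mem_erase ha'
        have hb : b ∈ t := Finset.mem_of_mem_erase hb'
        have haw : a ≠ w := Finset.ne_of_mem_erase ha'
        have hbw : b ≠ w := Finset.ne_of_mem_erase hb'
        have heq : t = insert w ({a, b} : Finset W) := by
          rw [← h2, Finset.insert_erase hwt]
        rcases hadjw a ha haw with rfl | rfl <;> rcases hadjw b hb hbw with rfl | rfl
        · exact absurd rfl hab
        · rw [heq]; ext x; simp; tauto
        · rw [heq]; ext x; simp; tauto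
        · exact absurd rfl hab
      · right
        refine ⟨ht.1, fun x hx y hy hxy => ?_⟩
        have h := ht.2 x hx y hy hxy
        rw [SimpleGraph.sup_adj] at h
        rcases h with h | h
        · exact h
        · exfalso
          rw [SimpleGraph.fromEdgeSet_adj] at h
          have hwxy : w ∈ s(x, y) := by
            rcases h.1 with h1 | h1 <;> rw [h1] <;> simp [Sym2.mem_iff]
          rcases Sym2.mem_iff.mp hwxy with rfl | rfl
          · exact hwt hx
          · exact hwt hy
    refine ⟨Function.update F ({u, v, w} : Finset W) (s(u, w), s(v, w)), ?_⟩
    intro t ht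
    by_cases htuvw : t = ({u, v, w} : Finset W)
    · subst htuvw
      rw [Function.update_self]
      constructor
      · refine ⟨?_, ?_, ?_⟩
        · exact mem_triEdges.mpr ⟨u, by simp, w, by simp, hwu.symm, rfl⟩
        · exact mem_triEdges.mpr ⟨v, by simp, w, by simp, hwv.symm, rfl⟩
        · intro heq
          rw [Sym2.eq_iff] at heq
          rcases heq with ⟨h1, _⟩ | ⟨h1, h2⟩
          · exact huv' h1
          · exact hwu h1.symm
      · intro t' ht' htt'
        have ht'H : IsTriangle H t' := by
          rcases hchar t' ht' with h | h
          · exact absurd h.symm htt'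
          · exact h
        rw [Function.update_of_ne (fun h => htt' h.symm)]
        have hw1 : w ∉ (F t').1 := hnotwe t' ht'H _ ((hF t' ht'H).1.1)
        have hw2 : w ∉ (F t').2 := hnotwe t' ht'H _ ((hF t' ht'H).1.2.1)
        have hmw1 : w ∈ s(u, w) := Sym2.mem_iff.mpr (Or.inr rfl)
        have hmw2 : w ∈ s(v, w) := Sym2.mem_iff.mpr (Or.inr rfl)
        exact ⟨fun h => hw1 (h ▸ hmw1), fun h => hw2 (h ▸ hmw1),
          fun h => hw1 (h ▸ hmw2), fun h => hw2 (h ▸ hmw2)⟩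
    · have htH : IsTriangle H t := by
        rcases hchar t ht with h | h
        · exact absurd h htuvw
        · exact h
      rw [Function.update_of_ne htuvw]
      obtain ⟨hmem, hdis⟩ := hF t htH
      refine ⟨hmem, ?_⟩
      intro t' ht' htt'
      by_cases ht'uvw : t' = ({u, v, w} : Finset W)
      · subst ht'uvw
        rw [Function.update_self]
        have hw1 : w ∉ (F t).1 := hnotwe t htH _ hmem.1
        have hw2 : w ∉ (F t).2 := hnotwe t htH _ hmem.2.1
        have hmw1 : w ∈ s(u, w) := Sym2.mem_iff.mpr (Or.inr rfl)
        have hmw2 : w ∈ s(v, w) := Sym2.mem_iff.mpr (Or.inr rfl)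
        exact ⟨fun h => hw1 (h ▸ hmw1), fun h => hw1 (h ▸ hmw2),
          fun h => hw2 (h ▸ hmw1), fun h => hw2 (h ▸ hmw2)⟩
      · rw [Function.update_of_ne ht'uvw]
        have ht'H : IsTriangle H t' := by
          rcases hchar t' ht' with h | h
          · exact absurd h ht'uvw
          · exact h
        exact hdis t' ht'H htt'

end Aux

/-- Every partial 2-tree (equivalently, simple series-parallel graph) satisfies
|E| ≥ 2|T_G|. -/
theorem partialTwoTree_numEdges_ge {V : Type} [Fintype V] [DecidableEq V]
    (G : SimpleGraph V) (hG : IsPartialTwoTree G) :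
    numEdges G ≥ 2 * numTris G := by
  classical
  obtain ⟨W, s, H, f, hH, hhom⟩ := hG
  obtain ⟨F, hF⟩ := twoTree_edgeAssign hH
  have hinj : Function.Injective f := f.injective
  have htri : ∀ t : Finset V, IsTriangle G t → IsTriangle H (t.image f) := by
    intro t ht
    refine ⟨by rw [Finset.card_image_of_injective _ hinj, ht.1], ?_⟩
    intro x hx y hy hxy
    obtain ⟨a, ha, rfl⟩ := Finset.mem_image.mp hx
    obtain ⟨b, hb, rfl⟩ := Finset.mem_image.mp hy
    exact hhom a b (ht.2 a ha b hb (fun h => hxy (h ▸ rfl)))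
  have hmapinj : Function.Injective (Sym2.map f) := Sym2.map.injective hinj
  set TG : Finset (Finset V) :=
    Set.Finite.toFinset (Set.toFinite {t : Finset V | IsTriangle G t}) with hTGdef
  have hTGmem : ∀ t, t ∈ TG ↔ IsTriangle G t := by
    intro t; simp [hTGdef]
  set EG : Finset (Sym2 V) := Set.Finite.toFinset (Set.toFinite G.edgeSet) with hEGdef
  set g : Finset V → Finset (Sym2 V) := fun t =>
    (triEdges t).filter (fun e =>
      Sym2.map f e = (F (t.image f)).1 ∨ Sym2.map f e = (F (t.image f)).2) with hg
  have himg : ∀ t : Finset V, (triEdges t).image (Sym2.map f) = triEdges (t.image f) := by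
    intro t
    ext e
    simp only [Finset.mem_image, mem_triEdges]
    constructor
    · rintro ⟨e', ⟨x, hx, y, hy, hxy, rfl⟩, rfl⟩
      exact ⟨f x, ⟨x, hx, rfl⟩, f y, ⟨y, hy, rfl⟩,
        fun h => hxy (hinj h), by rw [Sym2.map_pair_eq]⟩
    · rintro ⟨x, hx, y, hy, hxy, rfl⟩
      obtain ⟨a, ha, rfl⟩ := hx
      obtain ⟨b, hb, rfl⟩ := hy
      exact ⟨s(a, b), ⟨a, ha, b, hb, fun h => hxy (h ▸ rfl), rfl⟩, by rw [Sym2.map_pair_eq]⟩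
  have hcard : ∀ t ∈ TG, (g t).card = 2 := by
    intro t htmem
    have ht := (hTGmem t).mp htmem
    have htH := htri t ht
    obtain ⟨⟨h1, h2, h12⟩, _⟩ := hF (t.image f) htH
    have himg2 : (g t).image (Sym2.map f) =
        {(F (t.image f)).1, (F (t.image f)).2} := by
      ext e
      simp only [hg, Finset.mem_image, Finset.mem_filter, Finset.mem_insert,
        Finset.mem_singleton]
      constructor
      · rintro ⟨e', ⟨_, h⟩, rfl⟩
        exact h
      · intro h
        have he : e ∈ triEdges (t.image f) := by
          rcases h with rfl | rfl
          · exact h1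
          · exact h2
        rw [← himg t] at he
        obtain ⟨e', he', rfl⟩ := Finset.mem_image.mp he
        exact ⟨e', ⟨he', h⟩, rfl⟩
    have hc := congrArg Finset.card himg2
    rw [Finset.card_image_of_injective _ hmapinj, Finset.card_pair h12] at hc
    exact hc
  have hdisj : ∀ t₁ ∈ TG, ∀ t₂ ∈ TG, t₁ ≠ t₂ → Disjoint (g t₁) (g t₂) := by
    intro t₁ h1 t₂ h2 h12
    rw [Finset.disjoint_left]
    intro e he1 he2
    have ht1 := (hTGmem _).mp h1
    have ht2 := (hTGmem _).mp h2
    have hne : t₁.image f ≠ t₂.image f :=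
      fun h => h12 (Finset.image_injective hinj h)
    obtain ⟨d11, d12, d21, d22⟩ := (hF _ (htri _ ht1)).2 _ (htri _ ht2) hne
    simp only [hg, Finset.mem_filter] at he1 he2
    rcases he1.2 with a | a <;> rcases he2.2 with b | b
    · exact d11 (a.symm.trans b)
    · exact d12 (a.symm.trans b)
    · exact d21 (a.symm.trans b)
    · exact d22 (a.symm.trans b)
  have hsub : ∀ t ∈ TG, g t ⊆ EG := by
    intro t htmem e he
    have ht := (hTGmem t).mp htmem
    simp only [hg, Finset.mem_filter] at he
    obtain ⟨x, hx, y, hy, hxy, rfl⟩ := mem_triEdges.mp he.1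
    have hadj : G.Adj x y := ht.2 x hx y hy hxy
    simp only [hEGdef, Set.Finite.mem_toFinset]
    exact hadj
  have key : (TG.biUnion g).card = 2 * TG.card := by
    rw [Finset.card_biUnion hdisj, Finset.sum_congr rfl hcard, Finset.sum_const,
      smul_eq_mul, mul_comm]
  have hle : 2 * TG.card ≤ EG.card := by
    rw [← key]
    exact Finset.card_le_card (Finset.biUnion_subset.mpr hsub)
  have e1 : numTris G = TG.card := Set.ncard_eq_toFinset_card _ _
  have e2 : numEdges G = EG.card := Set.ncard_eq_toFinset_card _ _
  rw [ge_iff_le, e1, e2]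
  exact hle
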